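/- Let F be a field and set A_m^F = A_m ⊗_ℤ F, a finite-dimensional F-algebra. For every 1 ≤ i ≤ m, the left A_m^F-module P_i^F = A_m^F·(i) is injective as a left A_m^F-module (as well as projective). -/

import Mathlib

noncomputable section

open scoped TensorProduct

/-- Generators for the path ring of the quiver `Γ_m`: vertex idempotents `e i`
(the length-zero paths `(i)`), and the arrows `u i = (i|i+1)` and `d i = (i+1|i)`. -/
inductive AmGen : Type
  | e : ℕ → AmGen
  | u : ℕ → AmGen
  | d : ℕ → AmGen

/-- The free ring on the generators. -/
abbrev FA : Type := FreeAlgebra ℤ AmGen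

def ge (i : ℕ) : FA := FreeAlgebra.ι ℤ (AmGen.e i)
def gu (i : ℕ) : FA := FreeAlgebra.ι ℤ (AmGen.u i)
def gd (i : ℕ) : FA := FreeAlgebra.ι ℤ (AmGen.d i)

/-- The relations presenting the ring `A_m` as a quotient of the path ring of `Γ_m`:
first the relations presenting the path ring itself (the `(i)` are orthogonal idempotents
summing to `1`, arrows compose only when endpoints match, generators with out-of-range
indices vanish), and then the defining relations of `A_m`:
`(i-1|i|i+1) = (i+1|i|i-1) = 0`, `(i|i+1|i) = (i|i-1|i)` for `0 < i < m`, and `(0|1|0) = 0`. -/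
inductive AmRel (m : ℕ) : FA → FA → Prop
  | idem (i : ℕ) : AmRel m (ge i * ge i) (ge i)
  | orth (i j : ℕ) : i ≠ j → AmRel m (ge i * ge j) 0
  | sum_one : AmRel m (∑ i ∈ Finset.range (m + 1), ge i) 1
  | e_zero (i : ℕ) : m < i → AmRel m (ge i) 0
  | u_zero (i : ℕ) : m ≤ i → AmRel m (gu i) 0
  | d_zero (i : ℕ) : m ≤ i → AmRel m (gd i) 0
  | u_src (i : ℕ) : AmRel m (ge i * gu i) (gu i)
  | u_tgt (i : ℕ) : AmRel m (gu i * ge (i + 1)) (gu i)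
  | d_src (i : ℕ) : AmRel m (ge (i + 1) * gd i) (gd i)
  | d_tgt (i : ℕ) : AmRel m (gd i * ge i) (gd i)
  | uu (i : ℕ) : AmRel m (gu i * gu (i + 1)) 0
  | dd (i : ℕ) : AmRel m (gd (i + 1) * gd i) 0
  | loops (i : ℕ) : i + 1 < m → AmRel m (gu (i + 1) * gd (i + 1)) (gd i * gu i)
  | loop0 : AmRel m (gu 0 * gd 0) 0

/-- The ring `A_m`. -/
abbrev Am (m : ℕ) : Type := RingQuot (AmRel m)

/-- Quotient map from the free ring. -/
def toAm (m : ℕ) : FA →+* Am m := RingQuot.mkRingHom (AmRel m)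

/-- The image of the length-zero path `(i)` in `A_m`. -/
def eA (m i : ℕ) : Am m := toAm m (ge i)
/-- The image of the path `(i|i+1)` in `A_m`. -/
def uA (m i : ℕ) : Am m := toAm m (gu i)
/-- The image of the path `(i+1|i)` in `A_m`. -/
def dA (m i : ℕ) : Am m := toAm m (gd i)
/-- The image of the path `(i|i-1|i)` in `A_m` (for `i ≥ 1`). -/
def loopA (m i : ℕ) : Am m := dA m (i - 1) * uA m (i - 1)

/-- The left `A_m`-module `P_i = A_m (i)`. -/
def Pmod (m i : ℕ) : Submodule (Am m) (Am m) := Submodule.span (Am m) {eA m i}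

/-- The right `A_m`-module `₍i₎P = (i) A_m`. -/
def iPmod (m i : ℕ) : Submodule (Am m)ᵐᵒᵖ (Am m) := Submodule.span (Am m)ᵐᵒᵖ {eA m i}

end
noncomputable section

open scoped TensorProduct

set_option synthInstance.maxHeartbeats 1000000
set_option maxHeartbeats 1000000

/-- The base change `A_m^F = A_m ⊗_ℤ F` of `A_m` to a field `F`. -/
def AmF (m : ℕ) (F : Type) [Field F] : Type := Am m ⊗[ℤ] F

instance (m : ℕ) (F : Type) [Field F] : Ring (AmF m F) :=
  (Algebra.TensorProduct.instRing : Ring (Am m ⊗[ℤ] F))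

instance (m : ℕ) (F : Type) [Field F] : AddCommGroup (AmF m F) :=
  inferInstanceAs (AddCommGroup (Am m ⊗[ℤ] F))

/-- The element `(i) ⊗ 1` of `A_m^F`. -/
def eAF (m : ℕ) (F : Type) [Field F] (i : ℕ) : AmF m F :=
  (eA m i ⊗ₜ[ℤ] (1 : F) : Am m ⊗[ℤ] F)

/-- The left `A_m^F`-module `P_i^F = A_m^F · ((i) ⊗ 1)`. -/
def PmodF (m : ℕ) (F : Type) [Field F] (i : ℕ) : Submodule (AmF m F) (AmF m F) :=
  Submodule.span (AmF m F) {eAF m F i}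

/-!
Write `i = n + 1` and `e = (i)`. The module `P_i = A e` has the basis
`c = (e, (n|i), (i+1|i), L)`, where `L = (i|n|i)` is the loop at `i`, and
`b = (L, (i|n), (i|i+1), e)` in `e A` is dual to it for the pairing `(x, y) ↦ ψ (x y)`,
with `ψ a` the coefficient of `L` in `a e`. The relations of `A_m` make
`∑ₖ c k ⊗ b k` commute with every generator, hence with all of `A_m^F`. Given a left ideal
`I` and `g : I → P_i`, extend `ψ ∘ g` to an `F`-linear `f : A → F`; commutation makes
`a ↦ ∑ₖ f (b k a) • c k` left `A`-linear, and duality makes it restrict to `g` on `I`,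
so Baer's criterion applies.
-/

section Casimir

variable {F A ι : Type*} [Field F] [Ring A] [Algebra F A] [Fintype ι]

/-- The elements `a` with `(a ⊗ 1) C = C (1 ⊗ a)` for `C = ∑ₖ c k ⊗ b k ∈ A ⊗[F] A`,
tested against every functional on the second factor. -/
def casimirCentralizer (b c : ι → A) : Subalgebra F A where
  carrier := {a | ∀ φ : A →ₗ[F] F, ∑ k, φ (b k * a) • c k = a * ∑ k, φ (b k) • c k}
  mul_mem' {x y} hx hy φ := by
    have hxφ := hx (φ ∘ₗ LinearMap.mulRight F y)
    simp only [LinearMap.comp_apply, LinearMap.mulRight_apply] at hxφ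
    simp only [← mul_assoc, hxφ, hy φ]
  add_mem' {x y} hx hy φ := by
    simp only [mul_add, map_add, add_smul, Finset.sum_add_distrib, hx φ, hy φ, add_mul]
  algebraMap_mem' r φ := by
    simp only [← Algebra.commutes r, ← Algebra.smul_def, map_smul, smul_eq_mul,
      Finset.smul_sum, smul_smul]

theorem Module.injective_span_singleton_of_casimir {b c : ι → A} {e : A} (ψ : A →ₗ[F] F)
    (hc : ∀ k, c k ∈ Submodule.span A {e}) (hcas : casimirCentralizer (F := F) b c = ⊤)
    (hdual : ∑ k, ψ (b k * e) • c k = e) :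
    Module.Injective A (Submodule.span A {e}) := by
  set P := Submodule.span A {e}
  have hcas' (a : A) (φ : A →ₗ[F] F) :
      ∑ k, φ (b k * a) • c k = a * ∑ k, φ (b k) • c k :=
    (hcas ▸ Algebra.mem_top : a ∈ casimirCentralizer b c) φ
  have hP (p : A) (hp : p ∈ P) : ∑ k, ψ (b k * p) • c k = p := by
    obtain ⟨r, rfl⟩ := Submodule.mem_span_singleton.mp hp
    have := hcas' r (ψ ∘ₗ LinearMap.mulRight F e)
    simp only [LinearMap.comp_apply, LinearMap.mulRight_apply, hdual] at this
    simpa only [smul_eq_mul, mul_assoc] using this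
  refine Module.Baer.injective fun I g => ?_
  obtain ⟨f, hf⟩ := LinearMap.exists_extend
    (ψ ∘ₗ (P.subtype ∘ₗ g).restrictScalars F : (I.restrictScalars F) →ₗ[F] F)
  let h : A →ₗ[A] A :=
    { toFun a := ∑ k, f (b k * a) • c k
      map_add' x y := by simp only [mul_add, map_add, add_smul, Finset.sum_add_distrib]
      map_smul' r a := by
        have := hcas' r (f ∘ₗ LinearMap.mulRight F a)
        simpa only [LinearMap.comp_apply, LinearMap.mulRight_apply, smul_eq_mul, mul_assoc,
          RingHom.id_apply] using this }
  refine ⟨h.codRestrict P fun a => P.sum_mem fun k _ => P.smul_of_tower_mem _ (hc k), ?_⟩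
  intro x hx
  apply Subtype.ext
  have hfI (k : ι) : f (b k * x) = ψ (b k * g ⟨x, hx⟩) := by
    have := LinearMap.congr_fun hf (b k • ⟨x, hx⟩ : I)
    change f (b k * x) = ψ (g (b k • ⟨x, hx⟩)) at this
    rw [this, map_smul]
    rfl
  simp only [LinearMap.codRestrict_apply, h, LinearMap.coe_mk, AddHom.coe_mk, hfI]
  exact hP _ (g ⟨x, hx⟩).2

theorem Module.projective_span_singleton_of_isIdempotentElem {R : Type*} [Ring R] {e : R}
    (he : IsIdempotentElem e) : Module.Projective R (Submodule.span R {e}) := by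
  refine Module.Projective.of_split (Submodule.span R {e}).subtype
    ((LinearMap.toSpanSingleton R R e).codRestrict _ fun a =>
      Submodule.smul_mem _ a (Submodule.mem_span_singleton_self e)) ?_
  ext ⟨x, hx⟩
  obtain ⟨r, rfl⟩ := Submodule.mem_span_singleton.mp hx
  change (r * e) * e = r * e
  rw [mul_assoc, he.eq]

end Casimir

namespace Am

variable {m : ℕ}

theorem toAm_eq_of_rel {x y : FA} (h : AmRel m x y) : toAm m x = toAm m y :=
  RingQuot.mkRingHom_rel h

@[simp]
theorem eA_mul_eA (j k : ℕ) : eA m j * eA m k = if j = k then eA m j else 0 := by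
  split_ifs with h
  · subst h; simpa [eA] using toAm_eq_of_rel (AmRel.idem (m := m) j)
  · simpa [eA] using toAm_eq_of_rel (AmRel.orth (m := m) j k h)

theorem uA_eq_zero {j : ℕ} (h : m ≤ j) : uA m j = 0 := by
  simpa [uA] using toAm_eq_of_rel (AmRel.u_zero j h)

theorem dA_eq_zero {j : ℕ} (h : m ≤ j) : dA m j = 0 := by
  simpa [dA] using toAm_eq_of_rel (AmRel.d_zero j h)

theorem eA_mul_uA_self (k : ℕ) : eA m k * uA m k = uA m k := by
  simpa [eA, uA] using toAm_eq_of_rel (AmRel.u_src (m := m) k)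

theorem uA_mul_eA_succ (j : ℕ) : uA m j * eA m (j + 1) = uA m j := by
  simpa [eA, uA] using toAm_eq_of_rel (AmRel.u_tgt (m := m) j)

theorem eA_succ_mul_dA (k : ℕ) : eA m (k + 1) * dA m k = dA m k := by
  simpa [eA, dA] using toAm_eq_of_rel (AmRel.d_src (m := m) k)

theorem dA_mul_eA_self (j : ℕ) : dA m j * eA m j = dA m j := by
  simpa [eA, dA] using toAm_eq_of_rel (AmRel.d_tgt (m := m) j)

theorem uA_zero_mul_dA_zero : uA m 0 * dA m 0 = 0 := by
  simpa [uA, dA] using toAm_eq_of_rel (AmRel.loop0 (m := m))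

@[simp]
theorem eA_mul_uA (j k : ℕ) : eA m j * uA m k = if j = k then uA m k else 0 := by
  split_ifs with h
  · subst h; exact eA_mul_uA_self _
  · rw [← eA_mul_uA_self k, ← mul_assoc, eA_mul_eA, if_neg h, zero_mul]

@[simp]
theorem uA_mul_eA (j k : ℕ) : uA m j * eA m k = if k = j + 1 then uA m j else 0 := by
  split_ifs with h
  · subst h; exact uA_mul_eA_succ _
  · rw [← uA_mul_eA_succ j, mul_assoc, eA_mul_eA, if_neg (Ne.symm h), mul_zero]

@[simp]
theorem eA_mul_dA (j k : ℕ) : eA m j * dA m k = if j = k + 1 then dA m k else 0 := by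
  split_ifs with h
  · subst h; exact eA_succ_mul_dA _
  · rw [← eA_succ_mul_dA k, ← mul_assoc, eA_mul_eA, if_neg h, zero_mul]

@[simp]
theorem dA_mul_eA (j k : ℕ) : dA m j * eA m k = if j = k then dA m j else 0 := by
  split_ifs with h
  · subst h; exact dA_mul_eA_self _
  · rw [← dA_mul_eA_self j, mul_assoc, eA_mul_eA, if_neg h, mul_zero]

@[simp]
theorem uA_mul_uA (j k : ℕ) : uA m j * uA m k = 0 := by
  rcases eq_or_ne k (j + 1) with rfl | h
  · simpa [uA] using toAm_eq_of_rel (AmRel.uu (m := m) j)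
  · rw [← eA_mul_uA_self k, ← mul_assoc, uA_mul_eA, if_neg h, zero_mul]

@[simp]
theorem dA_mul_dA (j k : ℕ) : dA m j * dA m k = 0 := by
  rcases eq_or_ne j (k + 1) with rfl | h
  · simpa [dA] using toAm_eq_of_rel (AmRel.dd (m := m) k)
  · rw [← eA_succ_mul_dA k, ← mul_assoc, dA_mul_eA, if_neg h, zero_mul]

theorem loopA_succ (n : ℕ) : loopA m (n + 1) = dA m n * uA m n := rfl

@[simp]
theorem dA_mul_uA (j k : ℕ) : dA m j * uA m k = if j = k then loopA m (j + 1) else 0 := by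
  split_ifs with h
  · subst h; rfl
  · rw [← eA_mul_uA_self k, ← mul_assoc, dA_mul_eA, if_neg h, zero_mul]

/-- The guard `0 < j` is needed: `loopA m 0` is `loopA m 1` by truncated subtraction. -/
@[simp]
theorem uA_mul_dA (j k : ℕ) :
    uA m j * dA m k = if j = k ∧ 0 < j ∧ j < m then loopA m j else 0 := by
  split_ifs with h
  · obtain ⟨rfl, hj, hjm⟩ := h
    obtain ⟨n, rfl⟩ := Nat.exists_eq_succ_of_ne_zero hj.ne'
    simpa [uA, dA, loopA_succ] using toAm_eq_of_rel (AmRel.loops (m := m) n hjm)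
  · rcases eq_or_ne j k with rfl | hjk
    · rcases Nat.eq_zero_or_pos j with rfl | hj
      · exact uA_zero_mul_dA_zero
      · rw [uA_eq_zero (by omega), zero_mul]
    · rw [← eA_succ_mul_dA k, ← mul_assoc, uA_mul_eA, if_neg (by omega), zero_mul]

@[simp]
theorem eA_mul_loopA (j n : ℕ) :
    eA m j * loopA m (n + 1) = if j = n + 1 then loopA m (n + 1) else 0 := by
  rw [loopA_succ, ← mul_assoc, eA_mul_dA]
  split_ifs <;> simp

@[simp]
theorem loopA_mul_eA (n j : ℕ) :
    loopA m (n + 1) * eA m j = if j = n + 1 then loopA m (n + 1) else 0 := by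
  rw [loopA_succ, mul_assoc, uA_mul_eA]
  split_ifs <;> simp

@[simp]
theorem loopA_mul_uA (n j : ℕ) : loopA m (n + 1) * uA m j = 0 := by
  rw [loopA_succ, mul_assoc, uA_mul_uA, mul_zero]

@[simp]
theorem dA_mul_loopA (j n : ℕ) : dA m j * loopA m (n + 1) = 0 := by
  rw [loopA_succ, ← mul_assoc, dA_mul_dA, zero_mul]

@[simp]
theorem uA_mul_loopA (j n : ℕ) : uA m j * loopA m (n + 1) = 0 := by
  rw [loopA_succ, ← mul_assoc, uA_mul_dA]
  split_ifs with h
  · obtain ⟨rfl, hj, -⟩ := h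
    obtain ⟨k, rfl⟩ := Nat.exists_eq_succ_of_ne_zero hj.ne'
    rw [loopA_succ, mul_assoc, uA_mul_uA, mul_zero]
  · exact zero_mul _

@[simp]
theorem loopA_mul_dA (n j : ℕ) : loopA m (n + 1) * dA m j = 0 := by
  rw [loopA_succ, mul_assoc, uA_mul_dA]
  split_ifs with h
  · obtain ⟨rfl, hj, -⟩ := h
    obtain ⟨k, rfl⟩ := Nat.exists_eq_succ_of_ne_zero hj.ne'
    rw [loopA_succ, ← mul_assoc, dA_mul_dA, zero_mul]
  · exact mul_zero _

end Am

namespace AmF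

variable {m n : ℕ} {F : Type} [Field F]

instance : Algebra F (AmF m F) := Algebra.TensorProduct.rightAlgebra

variable (m F) in
def ofAm : Am m →+* AmF m F := Algebra.TensorProduct.includeLeftRingHom

theorem eAF_eq (i : ℕ) : eAF m F i = ofAm m F (eA m i) := rfl

theorem subalgebra_eq_top_of_generators {S : Subalgebra F (AmF m F)}
    (he : ∀ j, ofAm m F (eA m j) ∈ S)
    (hu : ∀ j < m, ofAm m F (uA m j) ∈ S) (hd : ∀ j < m, ofAm m F (dA m j) ∈ S) :
    S = ⊤ := by
  have hAm (x : Am m) : ofAm m F x ∈ S := by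
    obtain ⟨y, rfl⟩ := RingQuot.mkRingHom_surjective (AmRel m) x
    induction y using FreeAlgebra.induction with
    | grade0 k =>
      rw [eq_intCast, map_intCast, map_intCast]
      exact S.intCast_mem k
    | grade1 g =>
      cases g with
      | e j => exact he j
      | u j =>
        rcases lt_or_ge j m with hj | hj
        · exact hu j hj
        · show ofAm m F (uA m j) ∈ S
          rw [Am.uA_eq_zero hj, map_zero]
          exact S.zero_mem
      | d j =>
        rcases lt_or_ge j m with hj | hj
        · exact hd j hj
        · show ofAm m F (dA m j) ∈ S
          rw [Am.dA_eq_zero hj, map_zero]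
          exact S.zero_mem
    | mul x y hx hy => simpa only [map_mul] using S.mul_mem hx hy
    | add x y hx hy => simpa only [map_add] using S.add_mem hx hy
  suffices ∀ a, a ∈ S from eq_top_iff.mpr fun a _ => this a
  intro a
  induction a using TensorProduct.induction_on with
  | zero => exact S.zero_mem
  | tmul x f =>
    have : (x ⊗ₜ[ℤ] f : AmF m F) = ofAm m F x * algebraMap F (AmF m F) f := by
      change (x ⊗ₜ[ℤ] f : Am m ⊗[ℤ] F)
        = (x ⊗ₜ[ℤ] 1 : Am m ⊗[ℤ] F) * ((1 : Am m) ⊗ₜ[ℤ] f : Am m ⊗[ℤ] F)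
      rw [Algebra.TensorProduct.tmul_mul_tmul, mul_one, one_mul]
    rw [this]
    exact S.mul_mem (hAm x) (S.algebraMap_mem f)
  | add x y hx hy => exact S.add_mem hx hy

section LoopRepresentation

variable (m n F)

/-- `A_m` acts on `P_{n+1}` in the basis `(n+1), (n|n+1), (n+2|n+1), (n+1|n|n+1)`; these sit
at the vertices below. For `n + 1 = m` the third vector does not exist, and coordinate `2`
carries the simple module at `m` instead. -/
def repVertex : Fin 4 → ℕ := ![n + 1, n, min (n + 2) m, n + 1]

def repGen : AmGen → Matrix (Fin 4) (Fin 4) F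
  | .e j => Matrix.of fun a b => if a = b ∧ repVertex m n a = j then 1 else 0
  | .u j => Matrix.of fun a b =>
      if j = n ∧ a = 1 ∧ b = 0 ∨ j = n + 1 ∧ n + 1 < m ∧ a = 3 ∧ b = 2 then 1 else 0
  | .d j => Matrix.of fun a b =>
      if j = n + 1 ∧ n + 1 < m ∧ a = 2 ∧ b = 0 ∨ j = n ∧ a = 3 ∧ b = 1 then 1 else 0

theorem repGen_rel (hn : n < m) {x y : FA} (h : AmRel m x y) :
    FreeAlgebra.lift ℤ (repGen m n F) x = FreeAlgebra.lift ℤ (repGen m n F) y := by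
  induction h <;>
    simp only [ge, gu, gd, map_mul, map_zero, map_one, map_sum, FreeAlgebra.lift_ι_apply,
      repGen] <;>
    ext a b <;> fin_cases a <;> fin_cases b <;>
    simp [Matrix.mul_apply, Fin.sum_univ_four, repVertex, Matrix.sum_apply,
      Finset.sum_ite_eq] <;>
    (try split_ifs) <;> first | rfl | omega

variable {m n F}

def rep (hn : n < m) : Am m →ₐ[ℤ] Matrix (Fin 4) (Fin 4) F :=
  RingQuot.liftAlgHom ℤ ⟨FreeAlgebra.lift ℤ (repGen m n F), fun _ _ => repGen_rel m n F hn⟩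

theorem rep_toAm (hn : n < m) (x : FA) :
    rep (F := F) hn (toAm m x) = FreeAlgebra.lift ℤ (repGen m n F) x := by
  rw [toAm, ← RingQuot.mkAlgHom_coe ℤ]
  exact RingQuot.liftAlgHom_mkAlgHom_apply ℤ _ _ x

def repTensor (hn : n < m) : AmF m F →+* Matrix (Fin 4) (Fin 4) F :=
  (Algebra.TensorProduct.lift (rep hn) ((Algebra.ofId F _).restrictScalars ℤ)
    fun _ _ => Algebra.commute_algebraMap_right _ _).toRingHom

theorem repTensor_ofAm (hn : n < m) (x : Am m) : repTensor hn (ofAm m F x) = rep hn x :=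
  (Algebra.TensorProduct.lift_tmul _ _ _ x 1).trans (by simp)

theorem repTensor_algebraMap (hn : n < m) (f : F) :
    repTensor hn (algebraMap F (AmF m F) f) = algebraMap F _ f :=
  (Algebra.TensorProduct.lift_tmul _ _ _ 1 f).trans (by simp)

/-- The coefficient of the loop `(n+1|n|n+1)` in `a · (n+1)`. -/
def loopCoeff (hn : n < m) : AmF m F →ₗ[F] F where
  toFun x := repTensor hn x 3 0
  map_add' x y := by simp
  map_smul' f x := by
    rw [Algebra.smul_def, map_mul, repTensor_algebraMap, ← Algebra.smul_def]
    rfl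

theorem loopCoeff_ofAm (hn : n < m) (x : Am m) : loopCoeff hn (ofAm m F x) = rep hn x 3 0 :=
  congrArg (· 3 0) (repTensor_ofAm hn x)

theorem loopCoeff_loopA (hn : n < m) :
    loopCoeff (F := F) hn (ofAm m F (loopA m (n + 1))) = 1 := by
  rw [loopCoeff_ofAm, Am.loopA_succ, map_mul, dA, uA, rep_toAm, rep_toAm]
  simp [gd, gu, repGen, Matrix.mul_apply]

theorem loopCoeff_eA (hn : n < m) : loopCoeff (F := F) hn (ofAm m F (eA m (n + 1))) = 0 := by
  rw [loopCoeff_ofAm, eA, rep_toAm]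
  simp [ge, repGen]

end LoopRepresentation

theorem ofAm_mem_casimirCentralizer {ι : Type*} [Fintype ι] {b c : ι → Am m} {x : Am m}
    (h : ∀ φ : AmF m F →ₗ[F] F, ∑ k, φ (ofAm m F (b k * x)) • ofAm m F (c k) =
      ∑ k, φ (ofAm m F (b k)) • ofAm m F (x * c k)) :
    ofAm m F x ∈
      casimirCentralizer (F := F) (fun k => ofAm m F (b k)) (fun k => ofAm m F (c k)) := by
  intro φ
  have := h φ
  simp only [map_mul, ← mul_smul_comm] at this
  exact this.trans (Finset.mul_sum _ _ _).symm

/-- Dual bases of `A (n+1)` and `(n+1) A` for the pairing `(x, y) ↦ loopCoeff (x y)`. -/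
def projBasis (m n : ℕ) : Fin 4 → Am m :=
  ![eA m (n + 1), uA m n, dA m (n + 1), loopA m (n + 1)]

def projDualBasis (m n : ℕ) : Fin 4 → Am m :=
  ![loopA m (n + 1), dA m n, uA m (n + 1), eA m (n + 1)]

theorem casimirCentralizer_eq_top (n : ℕ) :
    casimirCentralizer (F := F) (fun k => ofAm m F (projDualBasis m n k))
      (fun k => ofAm m F (projBasis m n k)) = ⊤ := by
  refine subalgebra_eq_top_of_generators (fun j => ?_) (fun j hj => ?_) (fun j hj => ?_) <;>
    refine ofAm_mem_casimirCentralizer fun φ => ?_ <;>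
    simp [-map_mul, Fin.sum_univ_four, projBasis, projDualBasis] <;>
    split_ifs <;> (try omega) <;> subst_vars <;> simp

theorem projBasis_mul_eA (k : Fin 4) : projBasis m n k * eA m (n + 1) = projBasis m n k := by
  fin_cases k <;> simp [projBasis]

theorem projBasis_mem_span (k : Fin 4) :
    ofAm m F (projBasis m n k) ∈ Submodule.span (AmF m F) {eAF m F (n + 1)} :=
  Submodule.mem_span_singleton.mpr
    ⟨ofAm m F (projBasis m n k), by rw [smul_eq_mul, eAF_eq, ← map_mul, projBasis_mul_eA]⟩

theorem sum_loopCoeff_smul_projBasis (hn : n < m) :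
    ∑ k, loopCoeff hn (ofAm m F (projDualBasis m n k) * eAF m F (n + 1)) •
      ofAm m F (projBasis m n k) = eAF m F (n + 1) := by
  simp [Fin.sum_univ_four, projBasis, projDualBasis, eAF_eq, ← map_mul, loopCoeff_loopA,
    loopCoeff_eA]

theorem isIdempotentElem_eAF (i : ℕ) : IsIdempotentElem (eAF m F i) := by
  rw [IsIdempotentElem, eAF_eq, ← map_mul, Am.eA_mul_eA, if_pos rfl]

end AmF

theorem stmt12_general (m : ℕ) (F : Type) [Field F] (i : ℕ) (hi1 : 1 ≤ i)
    (hi : i ≤ m) :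
    Module.Injective (AmF m F) (PmodF m F i) ∧
    Module.Projective (AmF m F) (PmodF m F i) := by
  obtain ⟨n, rfl⟩ := Nat.exists_eq_add_of_le' hi1
  exact ⟨Module.injective_span_singleton_of_casimir (AmF.loopCoeff hi) AmF.projBasis_mem_span
    (AmF.casimirCentralizer_eq_top n) (AmF.sum_loopCoeff_smul_projBasis hi),
    Module.projective_span_singleton_of_isIdempotentElem (AmF.isIdempotentElem_eAF _)⟩

theorem stmt12 (m : ℕ) (hm : 1 ≤ m) (F : Type) [Field F] (i : ℕ) (hi1 : 1 ≤ i)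
    (hi : i ≤ m) :
    Module.Injective (AmF m F) (PmodF m F i) ∧
    Module.Projective (AmF m F) (PmodF m F i) :=
  stmt12_general m F i hi1 hi
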